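/- With m > 0, I(k), K(k) as above (I^{(1)} < 0, I^{(2)} > 0, K^{(1)} > 0, K^{(2)} > 0, both solving H(k+1) = C_{m,n}(k)H(k)), and τ = ⟨K(0), I(0)^⊥⟩ > 0, the following pointwise bounds hold for all k: K^{(1)}(k) I^{(2)}(k) ≤ τ ∏_{i=0}^{k-1} c_{2,n}(i)/c_{1,n}(i); −K^{(2)}(k) I^{(1)}(k) ≤ τ ∏_{i=0}^{k-1} c_{2,n}(i)/c_{1,n}(i); −I^{(1)}(k+1) K^{(2)}(k) ≤ (τ/c_{1,n}(k)) ∏_{i=0}^{k-1} c_{2,n}(i)/c_{1,n}(i); and I^{(2)}(k) K^{(1)}(k+1) ≤ (τ/c_{1,n}(k)) ∏_{i=0}^{k-1} c_{2,n}(i)/c_{1,n}(i). -/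

import Mathlib

open Matrix Filter Finset

/-- The matrix `C_{m,n}(k)` from the quantum solid torus Dirac operator. -/
noncomputable def Cmat (a c1 c2 : ℕ → ℕ → ℝ) (m : ℤ) (n k : ℕ) :
    Matrix (Fin 2) (Fin 2) ℝ :=
  !![1 / c1 n k, -(m : ℝ) / (a (n + 1) k * c1 n k);
     -(m : ℝ) / (a n (k + 1) * c1 n k),
     c2 n k + (m : ℝ) ^ 2 / (a n (k + 1) * a (n + 1) k * c1 n k)]

/-- `v^⊥ = (v₂, −v₁)`. -/
def perp (v : Fin 2 → ℝ) : Fin 2 → ℝ := ![v 1, -v 0]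

/-
The Wronskian `⟨K(k), I(k)^⊥⟩` of two solutions of `H(k+1) = C(k) H(k)` gets multiplied by
`det C(k) = c₂(k)/c₁(k)` at each step, so it equals `τ ∏_{i<k} c₂(i)/c₁(i)`. Written out, it is
`K⁽¹⁾I⁽²⁾ + K⁽²⁾(−I⁽¹⁾)`, a sum of two nonnegative terms, each therefore bounded by the
Wronskian. For the shifted products, the first row of the recurrence reads
`c₁ H⁽¹⁾(k+1) = H⁽¹⁾(k) − (m/a) H⁽²⁾(k)`; since `m/a ≥ 0` and `K⁽¹⁾(k+1) > 0`, this trades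
`c₁(k) (−I⁽¹⁾(k+1)) K⁽²⁾(k)` and `c₁(k) I⁽²⁾(k) K⁽¹⁾(k+1)` for the terms already bounded.
-/

lemma dotProduct_perp (v w : Fin 2 → ℝ) : v ⬝ᵥ perp w = v 0 * w 1 - v 1 * w 0 := by
  simp only [perp, dotProduct, Fin.sum_univ_two, Matrix.cons_val_zero, Matrix.cons_val_one]
  ring

lemma mulVec_dotProduct_perp_mulVec (M : Matrix (Fin 2) (Fin 2) ℝ) (v w : Fin 2 → ℝ) :
    (M *ᵥ v) ⬝ᵥ perp (M *ᵥ w) = M.det * (v ⬝ᵥ perp w) := by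
  rw [dotProduct_perp, dotProduct_perp]
  simp only [mulVec, dotProduct, Fin.sum_univ_two, det_fin_two]
  ring

lemma dotProduct_perp_eq_mul_prod_det (M : ℕ → Matrix (Fin 2) (Fin 2) ℝ)
    (I K : ℕ → Fin 2 → ℝ) (hI : ∀ k, I (k + 1) = M k *ᵥ I k)
    (hK : ∀ k, K (k + 1) = M k *ᵥ K k) (k : ℕ) :
    K k ⬝ᵥ perp (I k) = (K 0 ⬝ᵥ perp (I 0)) * ∏ i ∈ range k, (M i).det := by
  induction k with
  | zero => simp
  | succ k ih => rw [hI, hK, mulVec_dotProduct_perp_mulVec, ih, prod_range_succ]; ring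

section Cmat

variable (a c1 c2 : ℕ → ℕ → ℝ) (m : ℤ) (n k : ℕ)

lemma det_Cmat (ha : a n (k + 1) ≠ 0) (ha' : a (n + 1) k ≠ 0) (hc : c1 n k ≠ 0) :
    (Cmat a c1 c2 m n k).det = c2 n k / c1 n k := by
  rw [Cmat, det_fin_two_of]
  field_simp
  ring

lemma c1_mul_Cmat_mulVec_zero (hc : c1 n k ≠ 0) (v : Fin 2 → ℝ) :
    c1 n k * (Cmat a c1 c2 m n k *ᵥ v) 0 = v 0 - m / a (n + 1) k * v 1 := by
  simp only [Cmat, mulVec, dotProduct, Fin.sum_univ_two, of_apply, cons_val', cons_val_zero,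
    cons_val_one, empty_val', cons_val_fin_one]
  field_simp
  ring

end Cmat

theorem stmt_16_general (a c1 c2 : ℕ → ℕ → ℝ)
    (ha : ∀ n k, 0 < a n k)
    (hc1 : ∀ n k, 0 < c1 n k ∧ c1 n k ≤ 1)
    (m : ℤ) (hm : 0 < m) (n : ℕ)
    (I K : ℕ → Fin 2 → ℝ)
    (hI : ∀ k, I (k + 1) = Cmat a c1 c2 m n k *ᵥ I k)
    (hK : ∀ k, K (k + 1) = Cmat a c1 c2 m n k *ᵥ K k)
    (hI1 : ∀ k, I k 0 < 0) (hI2 : ∀ k, 0 < I k 1)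
    (hK1 : ∀ k, 0 < K k 0) (hK2 : ∀ k, 0 < K k 1)
    (τ : ℝ) (hτdef : τ = K 0 ⬝ᵥ perp (I 0)) :
    ∀ k,
      K k 0 * I k 1 ≤ τ * ∏ i ∈ Finset.range k, c2 n i / c1 n i ∧
      -(K k 1 * I k 0) ≤ τ * ∏ i ∈ Finset.range k, c2 n i / c1 n i ∧
      -I (k + 1) 0 * K k 1 ≤
        (τ / c1 n k) * ∏ i ∈ Finset.range k, c2 n i / c1 n i ∧
      I k 1 * K (k + 1) 0 ≤
        (τ / c1 n k) * ∏ i ∈ Finset.range k, c2 n i / c1 n i := by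
  intro k
  have hc1k := (hc1 n k).1
  have hW : K k 0 * I k 1 - K k 1 * I k 0 = τ * ∏ i ∈ range k, c2 n i / c1 n i := by
    rw [← dotProduct_perp, dotProduct_perp_eq_mul_prod_det _ I K hI hK, hτdef]
    refine congrArg _ (prod_congr rfl fun i _ => ?_)
    exact det_Cmat a c1 c2 m n i (ha _ _).ne' (ha _ _).ne' (hc1 n i).1.ne'
  set μ : ℝ := m / a (n + 1) k
  have hIstep : c1 n k * I (k + 1) 0 = I k 0 - μ * I k 1 := by
    rw [hI, c1_mul_Cmat_mulVec_zero _ _ _ _ _ _ hc1k.ne']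
  have hKstep : c1 n k * K (k + 1) 0 = K k 0 - μ * K k 1 := by
    rw [hK, c1_mul_Cmat_mulVec_zero _ _ _ _ _ _ hc1k.ne']
  have hμ : 0 ≤ μ * (I k 1 * K k 1) :=
    mul_nonneg (div_nonneg (by exact_mod_cast hm.le) (ha _ _).le) (mul_pos (hI2 k) (hK2 k)).le
  have hK0I1 := mul_pos (hK1 k) (hI2 k)
  have hK1I0 := mul_pos (hK2 k) (neg_pos.mpr (hI1 k))
  have hI1K0_succ := mul_pos (hI2 k) (mul_pos hc1k (hK1 (k + 1)))
  refine ⟨by linarith, by linarith, ?_, ?_⟩ <;> rw [div_mul_eq_mul_div, le_div_iff₀ hc1k, ← hW]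
  · linear_combination (-K k 1) * hIstep + I k 1 * hKstep + hI1K0_succ
  · linear_combination I k 1 * hKstep + hμ + hK1I0

theorem stmt_16 (a c1 c2 : ℕ → ℕ → ℝ)
    (ha : ∀ n k, 0 < a n k)
    (hc1 : ∀ n k, 0 < c1 n k ∧ c1 n k ≤ 1)
    (hc2 : ∀ n k, 0 < c2 n k ∧ c2 n k ≤ 1)
    (m : ℤ) (hm : 0 < m) (n : ℕ)
    (I K : ℕ → Fin 2 → ℝ)
    (hI : ∀ k, I (k + 1) = Cmat a c1 c2 m n k *ᵥ I k)
    (hK : ∀ k, K (k + 1) = Cmat a c1 c2 m n k *ᵥ K k)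
    (hI1 : ∀ k, I k 0 < 0) (hI2 : ∀ k, 0 < I k 1)
    (hK1 : ∀ k, 0 < K k 0) (hK2 : ∀ k, 0 < K k 1)
    (τ : ℝ) (hτdef : τ = K 0 ⬝ᵥ perp (I 0)) (hτ : 0 < τ) :
    ∀ k,
      K k 0 * I k 1 ≤ τ * ∏ i ∈ Finset.range k, c2 n i / c1 n i ∧
      -(K k 1 * I k 0) ≤ τ * ∏ i ∈ Finset.range k, c2 n i / c1 n i ∧
      -I (k + 1) 0 * K k 1 ≤
        (τ / c1 n k) * ∏ i ∈ Finset.range k, c2 n i / c1 n i ∧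
      I k 1 * K (k + 1) 0 ≤
        (τ / c1 n k) * ∏ i ∈ Finset.range k, c2 n i / c1 n i :=
  stmt_16_general a c1 c2 ha hc1 m hm n I K hI hK hI1 hI2 hK1 hK2 τ hτdef
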